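/- arXiv:2411.07107 — 2 statements merged into one kernel-verified Lean document; each statement's English description precedes it below -/
import Mathlib

section
/- For the chain WFA A_{d(·,w)} over the tropical semiring constructed from a string w = a_1⋯a_n (with states q_0,...,q_n, match transitions q_{i-1} → q_i scanning a_i with weight 0, substitution transitions q_{i-1} → q_i scanning any b ≠ a_i with weight 1, deletion transitions q_{i-1} → q_i scanning ε with weight 1, insertion self-loops on every state scanning any symbol with weight 1, and only q_n accepting with weight 0), the stringsum of any string u equals the Levenshtein edit distance between u and w. -/
/-! Write `d(i, u)` for the Levenshtein distance from the suffix `w.drop i` to `u`. The three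
branches of the Levenshtein recurrence for `d` are exactly the three kinds of transitions out of
`q_i` (deletion = ε-move to `q_{i+1}`, insertion = self-loop, substitution or match = letter move
to `q_{i+1}`), and `d(n, []) = 0` is the accept weight of `q_n`. So `d` is a potential that no
transition can undercut, which bounds every path weight from below (induction on paths), and
following at each state the branch realizing the minimum in the recurrence gives a path of weight
exactly `d(i, u)` (reverse induction on `i`, then induction on `u`). -/

open scoped ENNReal

/-- Costs for the Levenshtein distance (as in Mathlib's former
`Mathlib/Data/List/EditDistance/Defs.lean`, since removed from Mathlib). -/
structure Levenshtein.Cost (α β δ : Type*) where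
  delete : α → δ
  insert : β → δ
  substitute : α → β → δ

/-- The default cost: every deletion, insertion and substitution of a different symbol costs 1. -/
def Levenshtein.defaultCost {α : Type*} [DecidableEq α] : Levenshtein.Cost α α ℕ where
  delete _ := 1
  insert _ := 1
  substitute a b := if a = b then 0 else 1

/-- One step of the dynamic program for `suffixLevenshtein`. -/
def Levenshtein.impl {α β δ : Type*} [AddZeroClass δ] [Min δ] (C : Levenshtein.Cost α β δ)
    (xs : List α) (y : β) (d : {r : List δ // 0 < r.length}) : {r : List δ // 0 < r.length} :=
  let ⟨ds, w⟩ := d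
  xs.zip (ds.zip ds.tail) |>.foldr
    (init := ⟨[C.insert y + ds.getLast (List.ne_nil_of_length_pos w)], by simp⟩)
    (fun ⟨x, d₀, d₁⟩ ⟨r, w⟩ =>
      ⟨min (C.delete x + r[0]) (min (C.insert y + d₀) (C.substitute x y + d₁)) :: r, by simp⟩)

/-- The Levenshtein distances between each suffix of `xs` and `ys`. -/
def suffixLevenshtein {α β δ : Type*} [AddZeroClass δ] [Min δ] (C : Levenshtein.Cost α β δ)
    (xs : List α) (ys : List β) : {r : List δ // 0 < r.length} :=
  ys.foldr
    (Levenshtein.impl C xs)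
    (xs.foldr (init := ⟨[0], by simp⟩) (fun a ⟨r, w⟩ => ⟨(C.delete a + r[0]) :: r, by simp⟩))

/-- The Levenshtein distance between `xs` and `ys` with cost `C`. -/
def levenshtein {α β δ : Type*} [AddZeroClass δ] [Min δ] (C : Levenshtein.Cost α β δ)
    (xs : List α) (ys : List β) : δ :=
  let ⟨r, w⟩ := suffixLevenshtein C xs ys
  r[0]

theorem Levenshtein.impl_cons {α β δ : Type*} [AddZeroClass δ] [Min δ] (C : Cost α β δ)
    (x : α) (xs : List α) (y : β) (d : δ) (ds : List δ) (hds : 0 < ds.length) :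
    (impl C (x :: xs) y ⟨d :: ds, by simp⟩).1 =
      min (C.delete x + (impl C xs y ⟨ds, hds⟩).1[0]'(impl C xs y ⟨ds, hds⟩).2)
        (min (C.insert y + d) (C.substitute x y + ds[0])) :: (impl C xs y ⟨ds, hds⟩).1 := by
  obtain _ | ⟨d', ds⟩ := ds
  · simp at hds
  · rfl

open Levenshtein

section LevenshteinRecurrence

variable {α β δ : Type*} [AddZeroClass δ] [Min δ] (C : Cost α β δ)

theorem suffixLevenshtein_cons_right (xs : List α) (y : β) (ys : List β) :
    suffixLevenshtein C xs (y :: ys) = impl C xs y (suffixLevenshtein C xs ys) := rfl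

theorem suffixLevenshtein_nil_left (ys : List β) :
    (suffixLevenshtein C ([] : List α) ys).1 = [levenshtein C [] ys] := by
  cases ys <;> rfl

theorem suffixLevenshtein_cons_left (x : α) (xs : List α) (ys : List β) :
    (suffixLevenshtein C (x :: xs) ys).1 =
      levenshtein C (x :: xs) ys :: (suffixLevenshtein C xs ys).1 := by
  induction ys with
  | nil => rfl
  | cons y ys ih =>
    have h : suffixLevenshtein C (x :: xs) ys =
        ⟨levenshtein C (x :: xs) ys :: (suffixLevenshtein C xs ys).1, by simp⟩ := Subtype.ext ih
    have htail : (suffixLevenshtein C (x :: xs) (y :: ys)).1.tail =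
        (suffixLevenshtein C xs (y :: ys)).1 := by
      rw [suffixLevenshtein_cons_right, h, impl_cons _ _ _ _ _ _ (suffixLevenshtein C xs ys).2]
      rfl
    rw [← htail]
    unfold levenshtein
    obtain ⟨_ | ⟨d, ds⟩, hpos⟩ := suffixLevenshtein C (x :: xs) (y :: ys)
    · simp at hpos
    · rfl

theorem levenshtein_eq_of_suffixLevenshtein_eq_cons {xs : List α} {ys : List β} {d : δ}
    {ds : List δ} (h : (suffixLevenshtein C xs ys).1 = d :: ds) : levenshtein C xs ys = d := by
  unfold levenshtein
  generalize suffixLevenshtein C xs ys = s at h ⊢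
  obtain ⟨r, hr⟩ := s
  subst h
  rfl

theorem levenshtein_nil_nil : levenshtein C ([] : List α) ([] : List β) = 0 := rfl

theorem levenshtein_nil_cons (y : β) (ys : List β) :
    levenshtein C ([] : List α) (y :: ys) = C.insert y + levenshtein C [] ys := by
  apply levenshtein_eq_of_suffixLevenshtein_eq_cons (ds := [])
  have h : suffixLevenshtein C ([] : List α) ys = ⟨[levenshtein C [] ys], by simp⟩ :=
    Subtype.ext (suffixLevenshtein_nil_left C ys)
  rw [suffixLevenshtein_cons_right, h]
  rfl

theorem levenshtein_cons_nil (x : α) (xs : List α) :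
    levenshtein C (x :: xs) ([] : List β) = C.delete x + levenshtein C xs [] := rfl

theorem levenshtein_cons_cons (x : α) (xs : List α) (y : β) (ys : List β) :
    levenshtein C (x :: xs) (y :: ys) =
      min (C.delete x + levenshtein C xs (y :: ys))
        (min (C.insert y + levenshtein C (x :: xs) ys)
          (C.substitute x y + levenshtein C xs ys)) := by
  apply levenshtein_eq_of_suffixLevenshtein_eq_cons (ds := (suffixLevenshtein C xs (y :: ys)).1)
  have h : suffixLevenshtein C (x :: xs) ys =
      ⟨levenshtein C (x :: xs) ys :: (suffixLevenshtein C xs ys).1, by simp⟩ :=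
    Subtype.ext (suffixLevenshtein_cons_left C x xs ys)
  rw [suffixLevenshtein_cons_right, h, impl_cons _ _ _ _ _ _ (suffixLevenshtein C xs ys).2]
  rfl

end LevenshteinRecurrence
section LevenshteinBounds

variable {α β δ : Type*} [AddZeroClass δ] [LinearOrder δ] (C : Levenshtein.Cost α β δ)

theorem levenshtein_cons_left_le (x : α) (xs : List α) (ys : List β) :
    levenshtein C (x :: xs) ys ≤ C.delete x + levenshtein C xs ys := by
  cases ys with
  | nil => exact (levenshtein_cons_nil C x xs).le
  | cons y ys => exact (levenshtein_cons_cons C x xs y ys).trans_le (min_le_left _ _)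

theorem levenshtein_cons_right_le (xs : List α) (y : β) (ys : List β) :
    levenshtein C xs (y :: ys) ≤ C.insert y + levenshtein C xs ys := by
  cases xs with
  | nil => exact (levenshtein_nil_cons C y ys).le
  | cons x xs =>
    exact (levenshtein_cons_cons C x xs y ys).trans_le
      ((min_le_right _ _).trans (min_le_left _ _))

theorem levenshtein_cons_cons_le (x : α) (xs : List α) (y : β) (ys : List β) :
    levenshtein C (x :: xs) (y :: ys) ≤ C.substitute x y + levenshtein C xs ys :=
  (levenshtein_cons_cons C x xs y ys).trans_le ((min_le_right _ _).trans (min_le_right _ _))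

end LevenshteinBounds

theorem levenshtein_defaultCost_nil_left {α : Type*} [DecidableEq α] (ys : List α) :
    levenshtein defaultCost [] ys = ys.length := by
  induction ys with
  | nil => rfl
  | cons y ys ih => rw [levenshtein_nil_cons, ih, List.length_cons, add_comm]; rfl

theorem List.drop_castSucc {α : Type*} (l : List α) (i : Fin l.length) :
    l.drop i.castSucc = l[i] :: l.drop i.succ :=
  List.drop_eq_getElem_cons i.isLt

namespace Stmt8

/-- A weighted finite automaton over the tropical semiring `(ℝ≥0 ∪ {∞}, min, +, ∞, 0)`.
A missing transition (or non-accepting state) is encoded by weight `∞`. -/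
structure WFA (α : Type*) (Q : Type*) where
  trans : Q → Option α → Q → ℝ≥0∞
  start : Q
  accept : Q → ℝ≥0∞

/-- `M.PathWeight q u w` holds if there is a path of `M` from `q` scanning `u` whose weight
(the sum of its transition weights plus the accept weight of its last state) is `w`. -/
inductive WFA.PathWeight {α Q : Type*} (M : WFA α Q) : Q → List α → ℝ≥0∞ → Prop
  | accept (q : Q) : M.PathWeight q [] (M.accept q)
  | step (q q' : Q) (a : α) (u : List α) (w : ℝ≥0∞) :
      M.PathWeight q' u w → M.PathWeight q (a :: u) (M.trans q (some a) q' + w)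
  | eps (q q' : Q) (u : List α) (w : ℝ≥0∞) :
      M.PathWeight q' u w → M.PathWeight q u (M.trans q none q' + w)

/-- The stringsum of `u`: the minimum over all paths from the start state scanning `u` of
their weights (the empty minimum being `∞`). -/
noncomputable def WFA.stringsum {α Q : Type*} (M : WFA α Q) (u : List α) : ℝ≥0∞ :=
  sInf {w | M.PathWeight M.start u w}

/-- The chain WFA `A_{d(·,w)}` built from a string `w = a_1 ⋯ a_n`: states `q_0, …, q_n`,
match transitions `q_{i-1} → q_i` scanning `a_i` with weight 0, substitution transitions
`q_{i-1} → q_i` scanning any `b ≠ a_i` with weight 1, deletion (`ε`) transitions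
`q_{i-1} → q_i` with weight 1, insertion self-loops scanning any symbol with weight 1,
and only `q_n` accepting, with accept weight 0. -/
noncomputable def chain {α : Type*} [DecidableEq α] (w : List α) : WFA α (Fin (w.length + 1)) where
  start := 0
  accept := fun q => if q = Fin.last w.length then 0 else ⊤
  trans := fun q l q' =>
    match l with
    | some b =>
        if h : (q' : ℕ) = (q : ℕ) + 1 then
          if b = w.get ⟨q, by have := q'.isLt; omega⟩ then 0 else 1
        else if q' = q then 1 else ⊤
    | none => if (q' : ℕ) = (q : ℕ) + 1 then 1 else ⊤

theorem WFA.PathWeight.le_of_potential {α Q : Type*} {M : WFA α Q}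
    (f : Q → List α → ℝ≥0∞) (hacc : ∀ q, f q [] ≤ M.accept q)
    (hstep : ∀ q q' a u, f q (a :: u) ≤ M.trans q (some a) q' + f q' u)
    (heps : ∀ q q' u, f q u ≤ M.trans q none q' + f q' u)
    {q : Q} {u : List α} {v : ℝ≥0∞} (h : M.PathWeight q u v) : f q u ≤ v := by
  induction h with
  | accept q => exact hacc q
  | step q q' a u v _ ih => exact (hstep q q' a u).trans (by gcongr)
  | eps q q' u v _ ih => exact (heps q q' u).trans (by gcongr)

section Chain

variable {α : Type*} [DecidableEq α] (w : List α)

theorem chain_trans_some_castSucc_succ (i : Fin w.length) (b : α) :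
    (chain w).trans i.castSucc (some b) i.succ = (defaultCost.substitute w[i] b : ℕ) := by
  simp [chain, defaultCost, eq_comm]

theorem chain_trans_some_self (q : Fin (w.length + 1)) (b : α) :
    (chain w).trans q (some b) q = (defaultCost.insert b : ℕ) := by
  simp [chain, defaultCost]

theorem chain_trans_none_castSucc_succ (i : Fin w.length) :
    (chain w).trans i.castSucc none i.succ = (defaultCost.delete w[i] : ℕ) := by
  simp [chain, defaultCost]

theorem chain_trans_some_cases (q q' : Fin (w.length + 1)) (b : α) :
    (∃ i : Fin w.length, q = i.castSucc ∧ q' = i.succ) ∨ q' = q ∨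
      (chain w).trans q (some b) q' = ⊤ := by
  by_cases h : (q' : ℕ) = q + 1
  · exact .inl ⟨⟨q, by omega⟩, rfl, Fin.ext h⟩
  · by_cases h' : q' = q
    · exact .inr (.inl h')
    · simp [chain, h, h']

theorem chain_trans_none_cases (q q' : Fin (w.length + 1)) :
    (∃ i : Fin w.length, q = i.castSucc ∧ q' = i.succ) ∨ (chain w).trans q none q' = ⊤ := by
  by_cases h : (q' : ℕ) = q + 1
  · exact .inl ⟨⟨q, by omega⟩, rfl, Fin.ext h⟩
  · simp [chain, h]

theorem levenshtein_drop_le_of_chain_pathWeight {q : Fin (w.length + 1)} {u : List α}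
    {v : ℝ≥0∞} (h : (chain w).PathWeight q u v) :
    (levenshtein defaultCost (w.drop q) u : ℕ) ≤ v := by
  refine h.le_of_potential
    (fun (q : Fin (w.length + 1)) u => (levenshtein defaultCost (w.drop q) u : ℕ)) ?_ ?_ ?_
  · intro q
    by_cases hq : q = Fin.last _
    · simp [chain, hq, levenshtein_nil_nil]
    · simp [chain, hq]
  · intro q q' a u
    obtain ⟨i, rfl, rfl⟩ | rfl | htop := chain_trans_some_cases w q q' a
    · rw [chain_trans_some_castSucc_succ, List.drop_castSucc, ← Nat.cast_add, Nat.cast_le]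
      exact levenshtein_cons_cons_le ..
    · rw [chain_trans_some_self, ← Nat.cast_add, Nat.cast_le]
      exact levenshtein_cons_right_le ..
    · rw [htop, top_add]
      exact le_top
  · intro q q' u
    obtain ⟨i, rfl, rfl⟩ | htop := chain_trans_none_cases w q q'
    · rw [chain_trans_none_castSucc_succ, List.drop_castSucc, ← Nat.cast_add, Nat.cast_le]
      exact levenshtein_cons_left_le ..
    · rw [htop, top_add]
      exact le_top

theorem chain_pathWeight_last_length (u : List α) :
    (chain w).PathWeight (Fin.last _) u u.length := by
  induction u with
  | nil => simpa [chain] using WFA.PathWeight.accept (M := chain w) (Fin.last _)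
  | cons a u ih =>
    have h := WFA.PathWeight.step (Fin.last _) _ a u _ ih
    rwa [chain_trans_some_self, ← Nat.cast_add, Nat.add_comm _ u.length] at h

theorem chain_pathWeight_levenshtein_drop (q : Fin (w.length + 1)) (u : List α) :
    (chain w).PathWeight q u (levenshtein defaultCost (w.drop q) u : ℕ) := by
  induction q using Fin.reverseInduction generalizing u with
  | last => simpa [levenshtein_defaultCost_nil_left] using chain_pathWeight_last_length w u
  | cast i ih =>
    rw [List.drop_castSucc]
    induction u with
    | nil =>
      rw [levenshtein_cons_nil, Nat.cast_add, ← chain_trans_none_castSucc_succ]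
      exact .eps _ _ _ _ (ih [])
    | cons a u ihu =>
      rw [levenshtein_cons_cons]
      let P (n : ℕ) : Prop := (chain w).PathWeight i.castSucc (a :: u) n
      refine min_rec' P ?_ (min_rec' P ?_ ?_)
      · dsimp only [P]
        rw [Nat.cast_add, ← chain_trans_none_castSucc_succ]
        exact .eps _ _ _ _ (ih _)
      · dsimp only [P]
        rw [Nat.cast_add, ← chain_trans_some_self]
        exact .step _ _ _ _ _ ihu
      · dsimp only [P]
        rw [Nat.cast_add, ← chain_trans_some_castSucc_succ]
        exact .step _ _ _ _ _ (ih _)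

end Chain

/-- The stringsum of any string `u` under the chain WFA built from `w` equals the
Levenshtein edit distance from `w` to `u`. -/
theorem chain_stringsum_eq_levenshtein {α : Type*} [DecidableEq α] (w u : List α) :
    (chain w).stringsum u = ((levenshtein Levenshtein.defaultCost w u : ℕ) : ℝ≥0∞) := by
  have hstart : w.drop ((chain w).start : ℕ) = w := List.drop_zero
  refine IsLeast.csInf_eq ⟨?_, fun v hv => ?_⟩
  · simpa [hstart] using chain_pathWeight_levenshtein_drop w (chain w).start u
  · simpa [hstart] using levenshtein_drop_le_of_chain_pathWeight w hv

end Stmt8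
end

section
/- For a WDFA over a closed semiring, the backward weight of the start state (the allsum z = β[q_0]) decomposes over string lengths when computed in the binning semiring: for each 0 ≤ n ≤ D, the n-th component z_n equals the base-semiring sum, over all accepting paths from q_0 that scan exactly n symbols, of the product of their transition weights times the accept weight of their final state. -/
namespace Stmt19

/-- A weighted partial deterministic finite automaton with weights in a semiring `K`. -/
structure WDFA (α Q K : Type*) where
  trans : Q → α → Option (Q × K)
  start : Q
  accept : Q → K

variable {α Q K : Type*} [Semiring K]

/-- The base-semiring weight of the path from `q` scanning `w`: the product of its
transition weights times the accept weight of its final state (`0` if the path does not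
exist, which contributes nothing to sums since `0` is absorbing). -/
def baseWeight (M : WDFA α Q K) : Q → List α → K
  | q, [] => M.accept q
  | q, a :: u =>
    match M.trans q a with
    | some p => p.2 * baseWeight M p.1 u
    | none => 0

/-- The vector in `K^{D+1}` supported at index `j` with value `c`. -/
def e (D : ℕ) (j : ℕ) (c : K) : Fin (D + 1) → K :=
  fun k => if (k : ℕ) = j then c else 0

/-- Truncated convolution multiplication in the binning semiring over `K`. -/
def bmul (D : ℕ) (u v : Fin (D + 1) → K) : Fin (D + 1) → K :=
  fun i => ∑ j ∈ Finset.Iic i, u j * v (i - j)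

/-- The binning-semiring weight of the path from `q` scanning `w`, where every transition
weight `c` is the vector supported on index 1 with value `c` and every accept weight is a
vector supported on index 0. -/
def liftWeight (M : WDFA α Q K) (D : ℕ) : Q → List α → (Fin (D + 1) → K)
  | q, [] => e D 0 (M.accept q)
  | q, a :: u =>
    match M.trans q a with
    | some p => bmul D (e D 1 p.2) (liftWeight M D p.1 u)
    | none => fun _ => 0

@[simp]
lemma e_zero (D j : ℕ) : e D j (0 : K) = 0 := by
  ext k
  simp [e]

/-- `e D i a` is the truncated monomial `a xⁱ`; past the top bin `D` both sides vanish. -/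
lemma bmul_e_e (D i j : ℕ) (a b : K) : bmul D (e D i a) (e D j b) = e D (i + j) (a * b) := by
  ext k
  simp only [bmul, e]
  by_cases hk : (k : ℕ) = i + j
  · have hi : i < D + 1 := by omega
    have hik : (⟨i, hi⟩ : Fin (D + 1)) ≤ k := Fin.le_def.mpr (by simp only; omega)
    rw [Finset.sum_eq_single_of_mem _ (Finset.mem_Iic.mpr hik) fun l _ hl => by
      simp [show (l : ℕ) ≠ i from fun h => hl (Fin.ext h)]]
    have hsub : ((k - ⟨i, hi⟩ : Fin (D + 1)) : ℕ) = j := by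
      simp only [Fin.sub_val_of_le hik]
      omega
    simp [hsub, hk]
  · refine (Finset.sum_eq_zero fun l hlk => ?_).trans (by simp [hk])
    by_cases hl : (l : ℕ) = i
    · have hlk : l ≤ k := Finset.mem_Iic.mp hlk
      have hsub : ((k - l : Fin (D + 1)) : ℕ) ≠ j := by
        rw [Fin.sub_val_of_le hlk]
        have := Fin.le_def.mp hlk
        omega
      simp [hsub]
    · simp [hl]

lemma liftWeight_eq_e (M : WDFA α Q K) (D : ℕ) (q : Q) (w : List α) :
    liftWeight M D q w = e D w.length (baseWeight M q w) := by
  induction w generalizing q with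
  | nil => rfl
  | cons a u ih =>
    simp only [liftWeight, baseWeight, List.length_cons]
    cases M.trans q a with
    | none => exact (e_zero D _).symm
    | some p => simp only [ih, bmul_e_e, add_comm]

theorem backward_component_eq_general [TopologicalSpace K]
    (M : WDFA α Q K) (D : ℕ) (n : Fin (D + 1)) :
    (∑' w : List α, liftWeight M D M.start w n)
      = ∑' w : {w : List α // w.length = (n : ℕ)}, baseWeight M M.start (w : List α) := by
  have hbin (w : List α) : liftWeight M D M.start w n
      = {w : List α | w.length = (n : ℕ)}.indicator (baseWeight M M.start) w := by
    simp [liftWeight_eq_e, e, Set.indicator, eq_comm]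
  rw [tsum_congr hbin]
  exact (tsum_subtype _ _).symm

/-- The backward weight of the start state (the allsum `z = β[q₀]`), computed in the
binning semiring as the sum over all paths from `q₀` of their binning path weights,
decomposes over string lengths: its `n`-th component equals the base-semiring sum, over
all accepting paths from `q₀` scanning exactly `n` symbols, of the product of their
transition weights times the accept weight of their final state. -/
theorem backward_component_eq [Fintype α] [TopologicalSpace K] [T2Space K]
    (M : WDFA α Q K) (D : ℕ) (n : Fin (D + 1)) :
    (∑' w : List α, liftWeight M D M.start w n)
      = ∑' w : {w : List α // w.length = (n : ℕ)}, baseWeight M M.start (w : List α) :=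
  backward_component_eq_general M D n

end Stmt19
end
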